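/- arXiv:2510.07530 — 5 statements merged into one kernel-verified Lean document; each statement's English description precedes it below -/
import Mathlib

section
/- For every nonzero polynomial A over F₂, there exists a positive integer m such that for all k ≥ m one has A_{2k} = x² + x and A_{2k+1} = 1, where (A_j) are the Collatz sequences associated with A. (This proves the binary polynomial analogue of the Collatz conjecture.) -/
open Polynomial

/-- The analogue of 3 = first odd number > 1 : the first odd binary polynomial besides 1. -/
noncomputable def M1 : Polynomial (ZMod 2) := X ^ 2 + X + 1

/-- Valuation at `x` : multiplicity of the root 0. -/
noncomputable def valX (S : Polynomial (ZMod 2)) : ℕ := S.rootMultiplicity 0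

/-- Valuation at `x + 1` : multiplicity of the root 1 (note `X - 1 = X + 1` in characteristic 2). -/
noncomputable def valX1 (S : Polynomial (ZMod 2)) : ℕ := S.rootMultiplicity 1

/-- The odd part of a polynomial: `S / (x^{val_x S} (x+1)^{val_{x+1} S})`. -/
noncomputable def oddPart (S : Polynomial (ZMod 2)) : Polynomial (ZMod 2) :=
  S / (X ^ valX S * (X + 1) ^ valX1 S)

/-- The Collatz sequences `(A_j)` associated with `A`:
`A₀ = A`, `A_{2k+1} = oddPart (A_{2k})`, `A_{2k+2} = 1 + M₁ · A_{2k+1}`. -/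
noncomputable def collatz (A : Polynomial (ZMod 2)) : ℕ → Polynomial (ZMod 2)
  | 0 => A
  | j + 1 => if j % 2 = 0 then oddPart (collatz A j) else 1 + M1 * collatz A j

-- AUX
namespace CollatzF2

abbrev F := Polynomial (ZMod 2)

lemma h2 : (1 : F) + 1 = 0 := by
  have h : ((1 : ZMod 2) + 1) = 0 := by decide
  rw [← C_1, ← C_add, h, C_0]

lemma XC0 : (X - C (0 : ZMod 2)) = X := by simp

lemma XC1 : (X - C (1 : ZMod 2)) = X + 1 := by
  rw [C_1]; linear_combination -h2

lemma zmod2_ne0 : ∀ {a : ZMod 2}, a ≠ 0 → a = 1 := by decide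

lemma X_ne : (X : F) ≠ 0 := X_ne_zero
lemma X1_ne : (X + 1 : F) ≠ 0 := by
  intro h
  have := congrArg (eval 0) h
  simp at this

lemma pow_mul_ne (a b : ℕ) : (X ^ a * (X + 1) ^ b : F) ≠ 0 :=
  mul_ne_zero (pow_ne_zero _ X_ne) (pow_ne_zero _ X1_ne)

lemma valX_spec {V : F} (a b : ℕ) (hV0 : V.eval 0 = 1) :
    valX (X ^ a * (X + 1) ^ b * V) = a := by
  have hV : V ≠ 0 := fun h => by simp [h] at hV0
  have hne : (X ^ a * (X + 1) ^ b * V : F) ≠ 0 := mul_ne_zero (pow_mul_ne a b) hV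
  unfold valX
  rw [rootMultiplicity_mul hne, rootMultiplicity_mul (pow_mul_ne a b)]
  have h1 : rootMultiplicity (0 : ZMod 2) (X ^ a) = a := by
    conv_lhs => rw [← XC0]
    exact rootMultiplicity_X_sub_C_pow 0 a
  have h2' : rootMultiplicity (0 : ZMod 2) ((X + 1) ^ b : F) = 0 := by
    apply rootMultiplicity_eq_zero
    simp [IsRoot]
  have h3 : rootMultiplicity (0 : ZMod 2) V = 0 := by
    apply rootMultiplicity_eq_zero
    simp [IsRoot, hV0]
  rw [h1, h2', h3]
  omega

lemma valX1_spec {V : F} (a b : ℕ) (hV1 : V.eval 1 = 1) :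
    valX1 (X ^ a * (X + 1) ^ b * V) = b := by
  have hV : V ≠ 0 := fun h => by simp [h] at hV1
  have hne : (X ^ a * (X + 1) ^ b * V : F) ≠ 0 := mul_ne_zero (pow_mul_ne a b) hV
  unfold valX1
  rw [rootMultiplicity_mul hne, rootMultiplicity_mul (pow_mul_ne a b)]
  have h1 : rootMultiplicity (1 : ZMod 2) ((X : F) ^ a) = 0 := by
    apply rootMultiplicity_eq_zero
    simp [IsRoot]
  have h2' : rootMultiplicity (1 : ZMod 2) ((X + 1) ^ b : F) = b := by
    conv_lhs => rw [← XC1]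
    exact rootMultiplicity_X_sub_C_pow 1 b
  have h3 : rootMultiplicity (1 : ZMod 2) V = 0 := by
    apply rootMultiplicity_eq_zero
    simp [IsRoot, hV1]
  rw [h1, h2', h3]
  omega

lemma oddPart_spec {V : F} (a b : ℕ) (hV0 : V.eval 0 = 1) (hV1 : V.eval 1 = 1) :
    oddPart (X ^ a * (X + 1) ^ b * V) = V := by
  unfold oddPart
  rw [valX_spec a b hV0, valX1_spec a b hV1]
  rw [mul_comm (X ^ a * (X + 1) ^ b) V]
  exact mul_div_cancel_right₀ V (pow_mul_ne a b)

end CollatzF2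

namespace CollatzF2

lemma exists_decomp {B : F} (hB : B ≠ 0) :
    ∃ V : F, B = X ^ valX B * (X + 1) ^ valX1 B * V ∧ V.eval 0 = 1 ∧ V.eval 1 = 1 := by
  obtain ⟨q, hq, hq2⟩ := B.exists_eq_pow_rootMultiplicity_mul_and_not_dvd hB 0
  have hqne : q ≠ 0 := by
    intro h; rw [h, mul_zero] at hq; exact hB hq
  obtain ⟨V, hV, hV2⟩ := q.exists_eq_pow_rootMultiplicity_mul_and_not_dvd hqne 1
  have hVne : V ≠ 0 := by
    intro h; rw [h, mul_zero] at hV; exact hqne hV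
  have hV1 : V.eval 1 = 1 := by
    apply zmod2_ne0
    intro h
    exact hV2 (dvd_iff_isRoot.mpr h)
  have hq0 : q.eval 0 ≠ 0 := by
    intro h
    exact hq2 (dvd_iff_isRoot.mpr h)
  have hV0 : V.eval 0 = 1 := by
    apply zmod2_ne0
    intro h
    apply hq0
    rw [hV]
    simp [h]
  -- rootMultiplicity of q at 1 equals that of B at 1
  have hrm : q.rootMultiplicity 1 = B.rootMultiplicity 1 := by
    rw [hq, rootMultiplicity_mul (hq ▸ hB)]
    have : rootMultiplicity (1 : ZMod 2) ((X - C 0) ^ B.rootMultiplicity 0) = 0 := by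
      apply rootMultiplicity_eq_zero
      simp [IsRoot, XC0]
    omega
  refine ⟨V, ?_, hV0, hV1⟩
  show B = X ^ rootMultiplicity 0 B * (X + 1) ^ rootMultiplicity 1 B * V
  conv_lhs => rw [hq, hV]
  rw [XC0, XC1, hrm]
  ring

lemma oddPart_decomp {B : F} (hB : B ≠ 0) :
    B = X ^ valX B * (X + 1) ^ valX1 B * oddPart B ∧
    (oddPart B).eval 0 = 1 ∧ (oddPart B).eval 1 = 1 := by
  obtain ⟨V, hBV, hV0, hV1⟩ := exists_decomp hB
  have ha : valX B = valX (X ^ valX B * (X + 1) ^ valX1 B * V) := by rw [← hBV]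
  have hb : valX1 B = valX1 (X ^ valX B * (X + 1) ^ valX1 B * V) := by rw [← hBV]
  have : oddPart B = V := by
    rw [hBV] at *
    rw [oddPart_spec _ _ hV0 hV1]
  rw [this]
  exact ⟨hBV, hV0, hV1⟩

lemma natDegree_decomp {B : F} (hB : B ≠ 0) :
    B.natDegree = valX B + valX1 B + (oddPart B).natDegree := by
  obtain ⟨hBV, hV0, hV1⟩ := oddPart_decomp hB
  have hVne : oddPart B ≠ 0 := fun h => by simp [h] at hV0
  conv_lhs => rw [hBV]
  rw [natDegree_mul (pow_mul_ne _ _) hVne, natDegree_mul (pow_ne_zero _ X_ne) (pow_ne_zero _ X1_ne),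
    natDegree_pow, natDegree_pow, natDegree_X]
  have : (X + 1 : F).natDegree = 1 := by
    rw [← C_1]; exact natDegree_X_add_C 1
  rw [this]
  ring

end CollatzF2

namespace CollatzF2

noncomputable def cc (S : F) : ℕ := valX (S + 1) + valX1 (S + 1)
noncomputable def phi (S : F) : F := oddPart (1 + M1 * S)

lemma natDegree_M1 : (M1 : F).natDegree = 2 := by
  unfold M1; compute_degree!

lemma M1_ne : (M1 : F) ≠ 0 := by
  intro h
  have := congrArg (eval 0) h
  simp [M1] at this

lemma eval0_M1 : (M1 : F).eval 0 = 1 := by simp [M1]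
lemma eval1_M1 : (M1 : F).eval 1 = 1 := by simp [M1]; decide

lemma deg_pos {S : F} (hS0 : S.eval 0 = 1) (hne : S ≠ 1) : 0 < S.natDegree := by
  rcases Nat.eq_zero_or_pos S.natDegree with h | h
  · exfalso
    obtain ⟨a, ha⟩ := natDegree_eq_zero.mp h
    rw [← ha] at hS0 hne
    rw [eval_C] at hS0
    rw [hS0, C_1] at hne
    exact hne rfl
  · exact h

lemma phi_one : phi 1 = 1 := by
  have h : (1 : F) + M1 * 1 = X ^ 1 * (X + 1) ^ 1 * 1 := by
    simp only [M1]
    linear_combination h2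
  unfold phi
  rw [h, oddPart_spec 1 1 (by simp) (by simp)]

lemma key {S : F} (hS0 : S.eval 0 = 1) (hS1 : S.eval 1 = 1) (hne : S ≠ 1) :
    (phi S).eval 0 = 1 ∧ (phi S).eval 1 = 1 ∧
    ((phi S).natDegree < S.natDegree ∨
     ((phi S).natDegree = S.natDegree ∧ phi S ≠ 1 ∧ cc (phi S) < cc S)) := by
  have hd : 0 < S.natDegree := deg_pos hS0 hne
  have hSne : S ≠ 0 := fun h => by simp [h] at hS0
  have hUne : S + 1 ≠ 0 := by
    intro h
    exact hne (by linear_combination h - h2)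
  obtain ⟨hUd, hV0, hV1⟩ := oddPart_decomp hUne
  set V := oddPart (S + 1) with hVdef
  have hVne : V ≠ 0 := fun h => by simp [h] at hV0
  have hα : 1 ≤ valX (S + 1) := by
    rw [valX, le_rootMultiplicity_iff hUne, pow_one, dvd_iff_isRoot]
    simp [IsRoot, hS0]
    decide
  have hβ : 1 ≤ valX1 (S + 1) := by
    rw [valX1, le_rootMultiplicity_iff hUne, pow_one, dvd_iff_isRoot]
    simp only [IsRoot, eval_add, hS1, eval_one]
    decide
  obtain ⟨a, ha⟩ : ∃ a, valX (S + 1) = a + 1 := ⟨valX (S + 1) - 1, by omega⟩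
  obtain ⟨b, hb⟩ : ∃ b, valX1 (S + 1) = b + 1 := ⟨valX1 (S + 1) - 1, by omega⟩
  set Q : F := X ^ a * (X + 1) ^ b * ((X ^ 2 + X + 1) * V) with hQdef
  set W : F := Q + 1 with hWdef
  have hSU : S + 1 = X ^ (a + 1) * (X + 1) ^ (b + 1) * V := by
    rw [← ha, ← hb]; exact hUd
  have hB : 1 + M1 * S = X * (X + 1) * W := by
    rw [hWdef, hQdef]
    simp only [M1]
    linear_combination (X ^ 2 + X + 1 : F) * hSU - (X ^ 2 + X : F) * h2
  have hM1V0 : ((X ^ 2 + X + 1 : F) * V).eval 0 = 1 := by simp [hV0]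
  have hM1V1 : ((X ^ 2 + X + 1 : F) * V).eval 1 = 1 := by
    simp only [eval_mul, eval_add, eval_pow, eval_X, eval_one, hV1, mul_one]
    decide
  have hM1Vne : ((X ^ 2 + X + 1 : F) * V) ≠ 0 :=
    fun h => by simp [h] at hM1V0
  have hXadd1 : (X + 1 : F).natDegree = 1 := by rw [← C_1]; exact natDegree_X_add_C 1
  have hQdeg : Q.natDegree = S.natDegree := by
    have e1 : Q.natDegree = a + b + ((X ^ 2 + X + 1 : F) * V).natDegree := by
      rw [hQdef, natDegree_mul (pow_mul_ne a b) hM1Vne,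
        natDegree_mul (pow_ne_zero _ X_ne) (pow_ne_zero _ X1_ne),
        natDegree_pow, natDegree_pow, natDegree_X, hXadd1]
      ring
    have eM : ((X ^ 2 + X + 1 : F)).natDegree = 2 := by
      have := natDegree_M1
      rwa [M1] at this
    have e2 : ((X ^ 2 + X + 1 : F) * V).natDegree = 2 + V.natDegree := by
      rw [natDegree_mul (by rw [← M1]; exact M1_ne) hVne, eM]
    have e3 : (S + 1).natDegree = (a + 1) + (b + 1) + V.natDegree := by
      rw [natDegree_decomp hUne, ha, hb]
    have e4 : (S + 1).natDegree = S.natDegree := by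
      rw [← C_1, natDegree_add_C]
    omega
  have hWdeg : W.natDegree = S.natDegree := by
    rw [hWdef, ← C_1, natDegree_add_C, hQdeg]
  have hWne : W ≠ 0 := by
    intro h
    rw [h] at hWdeg
    simp at hWdeg
    omega
  -- properties of B := 1 + M1 * S
  have hBdeg : (1 + M1 * S).natDegree = 2 + S.natDegree := by
    have e : (1 + M1 * S : F) = M1 * S + C 1 := by rw [C_1]; ring
    rw [e, natDegree_add_C, natDegree_mul M1_ne hSne, natDegree_M1]
  have hBne : (1 + M1 * S : F) ≠ 0 := by
    apply ne_zero_of_natDegree_gt (n := 0)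
    omega
  obtain ⟨hBd, hph0, hph1⟩ := oddPart_decomp hBne
  have hphiB : phi S = oddPart (1 + M1 * S) := rfl
  have hdegsum : (1 + M1 * S : F).natDegree
      = valX (1 + M1 * S) + valX1 (1 + M1 * S) + (oddPart (1 + M1 * S)).natDegree :=
    natDegree_decomp hBne
  have hfin : 3 ≤ valX (1 + M1 * S) + valX1 (1 + M1 * S) →
      (phi S).eval 0 = 1 ∧ (phi S).eval 1 = 1 ∧
      ((phi S).natDegree < S.natDegree ∨
       ((phi S).natDegree = S.natDegree ∧ phi S ≠ 1 ∧ cc (phi S) < cc S)) := by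
    intro h3
    rw [hphiB]
    exact ⟨hph0, hph1, Or.inl (by omega)⟩
  rcases Nat.eq_zero_or_pos a with ha0 | hapos
  · -- a = 0 : degree drops
    have hW0 : W.eval 0 = 0 := by
      rw [hWdef, hQdef, ha0]
      simp [hV0]
      decide
    apply hfin
    obtain ⟨W', hW'⟩ : (X : F) ∣ W := by
      rw [← XC0]; exact dvd_iff_isRoot.mpr hW0
    have h1 : 2 ≤ valX (1 + M1 * S) := by
      rw [valX, le_rootMultiplicity_iff hBne, XC0]
      exact ⟨(X + 1) * W', by linear_combination hB + X * (X + 1) * hW'⟩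
    have h2' : 1 ≤ valX1 (1 + M1 * S) := by
      rw [valX1, le_rootMultiplicity_iff hBne, pow_one, XC1]
      exact ⟨X * W, by linear_combination hB⟩
    omega
  rcases Nat.eq_zero_or_pos b with hb0 | hbpos
  · -- b = 0 : degree drops
    have hW1 : W.eval 1 = 0 := by
      rw [hWdef, hQdef, hb0]
      simp [hV1]
      decide
    apply hfin
    obtain ⟨W', hW'⟩ : (X + 1 : F) ∣ W := by
      rw [← XC1]; exact dvd_iff_isRoot.mpr hW1
    have h1 : 1 ≤ valX (1 + M1 * S) := by
      rw [valX, le_rootMultiplicity_iff hBne, pow_one, XC0]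
      exact ⟨(X + 1) * W, by linear_combination hB⟩
    have h2' : 2 ≤ valX1 (1 + M1 * S) := by
      rw [valX1, le_rootMultiplicity_iff hBne, XC1]
      exact ⟨X * W', by linear_combination hB + X * (X + 1) * hW'⟩
    omega
  -- main case : a ≥ 1 and b ≥ 1
  have hW0 : W.eval 0 = 1 := by
    rw [hWdef, hQdef]
    simp [hV0, zero_pow hapos.ne']
  have hW1 : W.eval 1 = 1 := by
    rw [hWdef, hQdef]
    have e11 : ((1 : ZMod 2) + 1) = 0 := by decide
    simp [hV1, e11, zero_pow hbpos.ne']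
  have hphi : phi S = W := by
    rw [hphiB, hB, show (X * (X + 1) * W : F) = X ^ 1 * (X + 1) ^ 1 * W by ring]
    exact oddPart_spec 1 1 hW0 hW1
  rw [hphi]
  refine ⟨hW0, hW1, Or.inr ⟨hWdeg, ?_, ?_⟩⟩
  · intro h
    rw [h] at hWdeg
    rw [natDegree_one] at hWdeg
    omega
  · have hWQ : W + 1 = Q := by rw [hWdef]; linear_combination h2
    have e1 : cc W = a + b := by
      rw [cc, hWQ, hQdef, valX_spec a b hM1V0, valX1_spec a b hM1V1]
    have e2 : cc S = (a + 1) + (b + 1) := by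
      rw [cc, ha, hb]
    omega

end CollatzF2

namespace CollatzF2

lemma cc_le_deg {T : F} (hTne : T ≠ 1) : cc T ≤ T.natDegree := by
  have hUne : T + 1 ≠ 0 := by
    intro h
    exact hTne (by linear_combination h - h2)
  have h1 := natDegree_decomp hUne
  have h2' : (T + 1).natDegree = T.natDegree := by rw [← C_1, natDegree_add_C]
  rw [cc]
  omega

lemma reach_one : ∀ N : ℕ, ∀ S : F, S.eval 0 = 1 → S.eval 1 = 1 →
    S.natDegree ^ 2 + cc S ≤ N → ∃ n, phi^[n] S = 1 := by
  intro N
  induction N with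
  | zero =>
    intro S h0 h1 hm
    by_cases hS1 : S = 1
    · exact ⟨0, hS1⟩
    · have := deg_pos h0 hS1
      have : 1 ≤ S.natDegree ^ 2 := Nat.one_le_pow _ _ this
      omega
  | succ N ih =>
    intro S h0 h1 hm
    by_cases hS1 : S = 1
    · exact ⟨0, hS1⟩
    obtain ⟨p0, p1, hcase⟩ := key h0 h1 hS1
    have hd := deg_pos h0 hS1
    by_cases hp1 : phi S = 1
    · exact ⟨1, by simpa using hp1⟩
    have hccle : cc (phi S) ≤ (phi S).natDegree := cc_le_deg hp1
    have hmeas : (phi S).natDegree ^ 2 + cc (phi S) ≤ N := by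
      rcases hcase with h | ⟨he, _, hc⟩
      · have e1 : ((phi S).natDegree + 1) ^ 2 = (phi S).natDegree ^ 2
            + 2 * (phi S).natDegree + 1 := by ring
        have e2 : ((phi S).natDegree + 1) ^ 2 ≤ S.natDegree ^ 2 :=
          Nat.pow_le_pow_left h 2
        omega
      · rw [he]
        omega
    obtain ⟨n, hn⟩ := ih (phi S) p0 p1 hmeas
    exact ⟨n + 1, by rw [Function.iterate_succ_apply, hn]⟩

lemma phi_iter_stable {S : F} {n : ℕ} (h : phi^[n] S = 1) :
    ∀ k ≥ n, phi^[k] S = 1 := by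
  intro k hk
  obtain ⟨j, rfl⟩ : ∃ j, k = n + j := ⟨k - n, by omega⟩
  clear hk
  induction j with
  | zero => exact h
  | succ j ihj =>
    rw [← Nat.add_assoc, Function.iterate_succ_apply', ihj, phi_one]

lemma collatz_succ (A : F) (j : ℕ) : collatz A (j + 1)
    = if j % 2 = 0 then oddPart (collatz A j) else 1 + M1 * collatz A j := rfl

lemma collatz_odd_eq (A : F) : ∀ k : ℕ, collatz A (2 * k + 1) = phi^[k] (oddPart A) := by
  intro k
  induction k with
  | zero =>
    rw [collatz_succ]
    simp [collatz]
  | succ k ihk =>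
    have e1 : 2 * (k + 1) + 1 = (2 * k + 2) + 1 := by ring
    rw [e1, collatz_succ]
    have e2 : (2 * k + 2) % 2 = 0 := by omega
    rw [if_pos e2]
    have e3 : collatz A (2 * k + 2) = 1 + M1 * collatz A (2 * k + 1) := by
      rw [show 2 * k + 2 = (2 * k + 1) + 1 by ring, collatz_succ]
      rw [if_neg (by omega)]
    rw [e3, ihk, Function.iterate_succ_apply']
    rfl

lemma one_add_M1 : (1 + M1 * 1 : F) = X ^ 2 + X := by
  simp only [M1, mul_one]
  linear_combination h2

end CollatzF2

/-- binary polynomial Collatz conjecture: the Collatz sequences of every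
nonzero `A ∈ 𝔽₂[x]` eventually satisfy `A_{2k} = x² + x` and `A_{2k+1} = 1`. -/
theorem collatz_conjecture_F2 (A : Polynomial (ZMod 2)) (hA : A ≠ 0) :
    ∃ m : ℕ, 0 < m ∧ ∀ k ≥ m,
      collatz A (2 * k) = X ^ 2 + X ∧ collatz A (2 * k + 1) = 1 := by
  obtain ⟨_, h0, h1⟩ := CollatzF2.oddPart_decomp hA
  obtain ⟨n, hn⟩ := CollatzF2.reach_one _ (oddPart A) h0 h1 le_rfl
  refine ⟨n + 1, Nat.succ_pos n, fun k hk => ?_⟩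
  obtain ⟨j, rfl⟩ : ∃ j, k = j + 1 := ⟨k - 1, by omega⟩
  have hj : n ≤ j := by omega
  have hodd : collatz A (2 * (j + 1) + 1) = 1 := by
    rw [CollatzF2.collatz_odd_eq]
    exact CollatzF2.phi_iter_stable hn _ (by omega)
  refine ⟨?_, hodd⟩
  have e : 2 * (j + 1) = (2 * j + 1) + 1 := by ring
  rw [e, CollatzF2.collatz_succ, if_neg (by omega)]
  rw [CollatzF2.collatz_odd_eq, CollatzF2.phi_iter_stable hn j hj]
  exact CollatzF2.one_add_M1
end

section
/- Let A be a nonzero polynomial over F₂ with Collatz sequences (A_j), and set ℓ_k := deg(A_{2k+1}). Then for every k ≥ 0, ℓ_{k+1} ≤ ℓ_k ≤ deg(A); that is, the sequence of degrees of the odd terms of the Collatz sequences is nonincreasing and bounded above by deg(A). -/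
open Polynomial

/-!
Write `S = x^a (x+1)^b S'` with `S'` odd, so `deg S' = deg S - a - b`. For odd `B`, the
polynomial `1 + M₁ B` has degree `deg B + 2` and takes the value `1 + 1 · 1 = 0` at both
`0` and `1`, so its odd part loses at least the two degrees gained.
-/

namespace Polynomial

theorem pow_rootMultiplicity_mul_pow_rootMultiplicity_dvd {K : Type*} [Field K] {a b : K}
    (hab : a ≠ b) (p : K[X]) :
    (X - C a) ^ p.rootMultiplicity a * (X - C b) ^ p.rootMultiplicity b ∣ p :=
  (isCoprime_X_sub_C_of_isUnit_sub (sub_ne_zero.mpr hab).isUnit).pow.mul_dvd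
    (pow_rootMultiplicity_dvd p a) (pow_rootMultiplicity_dvd p b)

theorem eval_ne_zero_of_pow_rootMultiplicity_mul_eq {R : Type*} [CommRing R] {p q : R[X]} {a : R}
    (hp : p ≠ 0) (h : (X - C a) ^ p.rootMultiplicity a * q = p) : q.eval a ≠ 0 := by
  intro hq
  obtain ⟨r, rfl⟩ := dvd_iff_isRoot.mpr hq
  apply pow_rootMultiplicity_not_dvd hp a
  conv_rhs => rw [← h]
  exact ⟨r, by ring⟩

theorem X_add_one_ne_zero {R : Type*} [Semiring R] [Nontrivial R] : (X + 1 : R[X]) ≠ 0 := by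
  simpa using X_add_C_ne_zero (1 : R)

theorem natDegree_X_add_one {R : Type*} [Semiring R] [Nontrivial R] :
    (X + 1 : R[X]).natDegree = 1 := by
  simpa using natDegree_X_add_C (1 : R)

end Polynomial

theorem X_add_one_eq_X_sub_C_one : (X + 1 : (ZMod 2)[X]) = X - C 1 := by
  rw [CharTwo.sub_eq_add, map_one]

theorem monic_X_pow_valX_mul (S : (ZMod 2)[X]) :
    Monic (X ^ valX S * (X + 1) ^ valX1 S : (ZMod 2)[X]) := by
  monicity!

theorem X_pow_valX_mul_mul_oddPart (S : (ZMod 2)[X]) :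
    X ^ valX S * (X + 1) ^ valX1 S * oddPart S = S := by
  have hdvd : X ^ valX S * (X + 1) ^ valX1 S ∣ S := by
    simpa [valX, valX1, X_add_one_eq_X_sub_C_one] using
      pow_rootMultiplicity_mul_pow_rootMultiplicity_dvd (zero_ne_one' (ZMod 2)) S
  exact EuclideanDomain.mul_div_cancel' (monic_X_pow_valX_mul S).ne_zero hdvd

theorem oddPart_ne_zero {S : (ZMod 2)[X]} (hS : S ≠ 0) : oddPart S ≠ 0 :=
  right_ne_zero_of_mul (X_pow_valX_mul_mul_oddPart S ▸ hS)

theorem natDegree_oddPart_add {S : (ZMod 2)[X]} (hS : S ≠ 0) :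
    (oddPart S).natDegree + valX S + valX1 S = S.natDegree := by
  conv_rhs => rw [← X_pow_valX_mul_mul_oddPart S]
  rw [(monic_X_pow_valX_mul S).natDegree_mul' (oddPart_ne_zero hS),
    (monic_X.pow _).natDegree_mul' (pow_ne_zero _ X_add_one_ne_zero),
    natDegree_X_pow, natDegree_pow, natDegree_X_add_one]
  ring

theorem oddPart_eval_zero_ne_zero {S : (ZMod 2)[X]} (hS : S ≠ 0) : (oddPart S).eval 0 ≠ 0 := by
  have h : (X - C 0) ^ S.rootMultiplicity 0 * ((X + 1) ^ valX1 S * oddPart S) = S := by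
    rw [map_zero, sub_zero, ← mul_assoc]
    exact X_pow_valX_mul_mul_oddPart S
  have := eval_ne_zero_of_pow_rootMultiplicity_mul_eq hS h
  rw [eval_mul] at this
  exact right_ne_zero_of_mul this

theorem oddPart_eval_one_ne_zero {S : (ZMod 2)[X]} (hS : S ≠ 0) : (oddPart S).eval 1 ≠ 0 := by
  have h : (X - C 1) ^ S.rootMultiplicity 1 * (X ^ valX S * oddPart S) = S := by
    rw [← X_add_one_eq_X_sub_C_one, mul_left_comm, ← mul_assoc]
    exact X_pow_valX_mul_mul_oddPart S
  have := eval_ne_zero_of_pow_rootMultiplicity_mul_eq hS h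
  rw [eval_mul] at this
  exact right_ne_zero_of_mul this

theorem natDegree_M1 : M1.natDegree = 2 := by
  unfold M1; compute_degree!

theorem natDegree_one_add_M1_mul {B : (ZMod 2)[X]} (hB : B ≠ 0) :
    (1 + M1 * B).natDegree = B.natDegree + 2 := by
  have hM1 : M1 ≠ 0 := ne_zero_of_natDegree_gt (natDegree_M1 ▸ two_pos)
  have hMB : (M1 * B).natDegree = B.natDegree + 2 := by
    rw [natDegree_mul hM1 hB, natDegree_M1, add_comm]
  rw [natDegree_add_eq_right_of_natDegree_lt (by rw [natDegree_one, hMB]; omega), hMB]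

theorem one_add_M1_mul_ne_zero {B : (ZMod 2)[X]} (hB : B ≠ 0) : 1 + M1 * B ≠ 0 :=
  ne_zero_of_natDegree_gt (n := 0) (by rw [natDegree_one_add_M1_mul hB]; omega)

theorem natDegree_oddPart_one_add_M1_mul_le {B : (ZMod 2)[X]}
    (h0 : B.eval 0 ≠ 0) (h1 : B.eval 1 ≠ 0) :
    (oddPart (1 + M1 * B)).natDegree ≤ B.natDegree := by
  have hB : B ≠ 0 := fun h => h0 (h ▸ eval_zero)
  have hS := one_add_M1_mul_ne_zero hB
  have hroot (a : ZMod 2) (ha : B.eval a ≠ 0) (hM1 : M1.eval a = 1) :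
      0 < (1 + M1 * B).rootMultiplicity a := by
    refine (rootMultiplicity_pos hS).mpr ?_
    rw [IsRoot, eval_add, eval_one, eval_mul, hM1, one_mul]
    generalize B.eval a = b at ha
    revert b; decide
  have hx := hroot 0 h0 (by simp [M1])
  have hx1 := hroot 1 h1 (by simp [M1]; decide)
  have := natDegree_oddPart_add hS
  rw [natDegree_one_add_M1_mul hB] at this
  unfold valX valX1 at this
  omega

theorem collatz_two_mul_add_one (A : (ZMod 2)[X]) (k : ℕ) :
    collatz A (2 * k + 1) = oddPart (collatz A (2 * k)) := by
  simp [collatz]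

theorem collatz_two_mul_add_two (A : (ZMod 2)[X]) (k : ℕ) :
    collatz A (2 * (k + 1)) = 1 + M1 * collatz A (2 * k + 1) := by
  rw [mul_add, mul_one, collatz, if_neg (by omega)]

theorem collatz_two_mul_ne_zero {A : (ZMod 2)[X]} (hA : A ≠ 0) (k : ℕ) :
    collatz A (2 * k) ≠ 0 := by
  induction k with
  | zero => exact hA
  | succ k ih =>
    rw [collatz_two_mul_add_two, collatz_two_mul_add_one]
    exact one_add_M1_mul_ne_zero (oddPart_ne_zero ih)

/-- the degrees `ℓ_k = deg A_{2k+1}` of the odd terms form a nonincreasing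
sequence bounded above by `deg A`. -/
theorem odd_degrees_nonincreasing (A : Polynomial (ZMod 2)) (hA : A ≠ 0) :
    ∀ k : ℕ, (collatz A (2 * (k + 1) + 1)).natDegree ≤ (collatz A (2 * k + 1)).natDegree ∧
      (collatz A (2 * k + 1)).natDegree ≤ A.natDegree := by
  have step (k : ℕ) :
      (collatz A (2 * (k + 1) + 1)).natDegree ≤ (collatz A (2 * k + 1)).natDegree := by
    have hne := collatz_two_mul_ne_zero hA k
    rw [collatz_two_mul_add_one A (k + 1), collatz_two_mul_add_two, collatz_two_mul_add_one]
    exact natDegree_oddPart_one_add_M1_mul_le (oddPart_eval_zero_ne_zero hne)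
      (oddPart_eval_one_ne_zero hne)
  have bound (k : ℕ) : (collatz A (2 * k + 1)).natDegree ≤ A.natDegree := by
    induction k with
    | zero =>
      rw [collatz_two_mul_add_one, ← natDegree_oddPart_add hA]
      exact (Nat.le_add_right _ _).trans (Nat.le_add_right _ _)
    | succ k ih => exact (step k).trans ih
  exact fun k => ⟨step k, bound k⟩
end

section
/- Let t ≥ 1 be an integer and let B : ZMod t → F₂[x] be a family of polynomials over F₂ satisfying the cyclic system of equations M₁ · B(i) + (1 + M₁) · B(i + 1) = 1 for every i ∈ ZMod t, where M₁ = x² + x + 1. Then B(i) = 1 for every i. -/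
open Polynomial

/-- a cyclic family `B : ZMod t → 𝔽₂[x]` satisfying
`M₁ B(i) + (1 + M₁) B(i+1) = 1` for all `i` must be constantly 1. -/
theorem cyclic_system_solution (t : ℕ) (ht : 1 ≤ t) (B : ZMod t → Polynomial (ZMod 2))
    (hB : ∀ i : ZMod t, M1 * B i + (1 + M1) * B (i + 1) = 1) :
    ∀ i : ZMod t, B i = 1 := by

  have h2 : (2 : Polynomial (ZMod 2)) = 0 := by
    exact CharTwo.two_eq_zero
  have hMne : (X ^ 2 + X + 1 : Polynomial (ZMod 2)) ≠ 0 := by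
    intro h
    have := congrArg (Polynomial.eval 0) h
    simp at this
  have hXne : (X : Polynomial (ZMod 2)) ≠ 0 := Polynomial.X_ne_zero
  have hX1ne : (X + 1 : Polynomial (ZMod 2)) ≠ 0 := by
    intro h
    have := congrArg (Polynomial.eval 0) h
    simp at this
  have hXXne : (X ^ 2 + X : Polynomial (ZMod 2)) ≠ 0 := by
    have : (X ^ 2 + X : Polynomial (ZMod 2)) = X * (X + 1) := by ring
    rw [this]
    exact mul_ne_zero hXne hX1ne
  have hM : Polynomial.rootMultiplicity (0 : ZMod 2) (X ^ 2 + X + 1) = 0 := by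
    apply Polynomial.rootMultiplicity_eq_zero
    simp [Polynomial.IsRoot]
  have hX : Polynomial.rootMultiplicity (0 : ZMod 2) (X : Polynomial (ZMod 2)) = 1 := by
    rw [show (X : Polynomial (ZMod 2)) = X - Polynomial.C 0 by simp]
    exact Polynomial.rootMultiplicity_X_sub_C_self
  have hX1 : Polynomial.rootMultiplicity (0 : ZMod 2) (X + 1 : Polynomial (ZMod 2)) = 0 := by
    apply Polynomial.rootMultiplicity_eq_zero
    simp [Polynomial.IsRoot]
  have hXX : Polynomial.rootMultiplicity (0 : ZMod 2) (X ^ 2 + X : Polynomial (ZMod 2)) = 1 := by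
    have he : (X ^ 2 + X : Polynomial (ZMod 2)) = X * (X + 1) := by ring
    rw [he, Polynomial.rootMultiplicity_mul (mul_ne_zero hXne hX1ne), hX, hX1]
  have key : ∀ i : ZMod t,
      (X ^ 2 + X + 1 : Polynomial (ZMod 2)) * (B i + 1) = (X ^ 2 + X) * (B (i + 1) + 1) := by
    intro i
    have h := hB i
    simp only [M1] at h
    linear_combination h + (1 - (X ^ 2 + X + 1) * B (i + 1)) * h2
  have step : ∀ j : ZMod t, B j + 1 ≠ 0 →
      (B (j + 1) + 1 ≠ 0 ∧
        Polynomial.rootMultiplicity (0 : ZMod 2) (B j + 1)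
          = Polynomial.rootMultiplicity (0 : ZMod 2) (B (j + 1) + 1) + 1) := by
    intro j hj
    have hk := key j
    have hne' : B (j + 1) + 1 ≠ 0 := by
      intro h0
      rw [h0, mul_zero] at hk
      rcases mul_eq_zero.mp hk with h | h
      · exact hMne h
      · exact hj h
    refine ⟨hne', ?_⟩
    have h1 : Polynomial.rootMultiplicity (0 : ZMod 2) ((X ^ 2 + X + 1) * (B j + 1))
        = Polynomial.rootMultiplicity (0 : ZMod 2) (B j + 1) := by
      rw [Polynomial.rootMultiplicity_mul (mul_ne_zero hMne hj), hM, zero_add]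
    have h2' : Polynomial.rootMultiplicity (0 : ZMod 2) ((X ^ 2 + X) * (B (j + 1) + 1))
        = 1 + Polynomial.rootMultiplicity (0 : ZMod 2) (B (j + 1) + 1) := by
      rw [Polynomial.rootMultiplicity_mul (mul_ne_zero hXXne hne'), hXX]
    rw [hk, h2'] at h1
    omega
  intro i
  by_contra hne
  have hC : B i + 1 ≠ 0 := by
    intro h
    apply hne
    linear_combination h - h2
  have hall : ∀ n : ℕ, B (i + (n : ZMod t)) + 1 ≠ 0 := by
    intro n
    induction n with
    | zero => simpa using hC
    | succ k ih =>
      have h' := (step (i + (k : ZMod t)) ih).1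
      have hc : (i + ((k + 1 : ℕ) : ZMod t)) = i + (k : ZMod t) + 1 := by push_cast; ring
      rw [hc]
      exact h'
  have hval : ∀ n : ℕ, Polynomial.rootMultiplicity (0 : ZMod 2) (B i + 1)
      = Polynomial.rootMultiplicity (0 : ZMod 2) (B (i + (n : ZMod t)) + 1) + n := by
    intro n
    induction n with
    | zero => simp
    | succ k ih =>
      have h' := (step (i + (k : ZMod t)) (hall k)).2
      have hc : (i + ((k + 1 : ℕ) : ZMod t)) = i + (k : ZMod t) + 1 := by push_cast; ring
      rw [hc]
      omega
  have hfin := hval t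
  rw [ZMod.natCast_self, add_zero] at hfin
  omega
end

section
/- Let n = 2^r · u be a positive integer with r ≥ 0 and u odd, and set M₁ = x² + x + 1 ∈ F₂[x]. Then M₁^n + 1 = x^{2^r} · (x+1)^{2^r} · (∑_{i=0}^{u−1} M₁^i)^{2^r}, and the polynomial (∑_{i=0}^{u−1} M₁^i)^{2^r} is odd. Consequently, val_x(M₁^n + 1) = val_{x+1}(M₁^n + 1) = 2^r, and the first odd term A₁ of the Collatz sequences of A = M₁^n + 1 equals (∑_{i=0}^{u−1} M₁^i)^{2^r}. -/
open Polynomial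

/-- for `n = 2^r u` with `u` odd,
`M₁^n + 1 = x^{2^r} (x+1)^{2^r} (∑_{i<u} M₁^i)^{2^r}` where the last factor is odd; hence
`val_x(M₁^n + 1) = val_{x+1}(M₁^n + 1) = 2^r` and the first odd term of the Collatz
sequences of `M₁^n + 1` is `(∑_{i<u} M₁^i)^{2^r}`. -/
theorem mersenne_M1_factorization (r u n : ℕ) (hu : Odd u) (hn : n = 2 ^ r * u)
    (hpos : 0 < n) :
    M1 ^ n + 1 = X ^ (2 ^ r) * (X + 1) ^ (2 ^ r) *
        (∑ i ∈ Finset.range u, M1 ^ i) ^ (2 ^ r) ∧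
    ((∑ i ∈ Finset.range u, M1 ^ i) ^ (2 ^ r)).eval 0 = 1 ∧
    ((∑ i ∈ Finset.range u, M1 ^ i) ^ (2 ^ r)).eval 1 = 1 ∧
    valX (M1 ^ n + 1) = 2 ^ r ∧ valX1 (M1 ^ n + 1) = 2 ^ r ∧
    oddPart (M1 ^ n + 1) = (∑ i ∈ Finset.range u, M1 ^ i) ^ (2 ^ r) := by
  set S : Polynomial (ZMod 2) := ∑ i ∈ Finset.range u, M1 ^ i with hS
  have hX1 : (X + 1 : Polynomial (ZMod 2)) = X - C 1 := by
    simp [sub_eq_add_neg, CharTwo.neg_eq]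
  -- the factorization
  have hM1 : M1 + 1 = X * (X + 1) := by
    have h2 : (2 : Polynomial (ZMod 2)) = 0 := CharTwo.two_eq_zero
    rw [M1]; ring_nf; rw [h2]; ring
  have hgeom : M1 ^ u + 1 = X * (X + 1) * S := by
    have := geom_sum_mul M1 u
    rw [CharTwo.sub_eq_add, CharTwo.sub_eq_add] at this
    rw [← hM1, ← this]; ring
  have hfact : M1 ^ n + 1 = X ^ (2 ^ r) * (X + 1) ^ (2 ^ r) * S ^ (2 ^ r) := by
    have : M1 ^ n + 1 = (M1 ^ u + 1) ^ (2 ^ r) := by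
      rw [add_pow_char_pow (p := 2) (M1 ^ u) 1 r, one_pow, hn, pow_mul']
    rw [this, hgeom, mul_pow, mul_pow]
  -- evaluations of S
  obtain ⟨k, hk⟩ := hu
  have hucast : ((u : ZMod 2)) = 1 := by
    subst hk; push_cast; ring_nf; simp [CharTwo.two_eq_zero]
  have heval0 : S.eval 0 = 1 := by
    rw [hS]
    simp only [eval_finset_sum, eval_pow, M1]
    simp [hucast]
  have heval1 : S.eval 1 = 1 := by
    rw [hS]
    have : (M1).eval 1 = 1 := by simp [M1]; decide
    simp only [eval_finset_sum, eval_pow, this, one_pow]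
    simpa using hucast
  have hev0 : (S ^ (2 ^ r)).eval 0 = 1 := by simp [heval0]
  have hev1 : (S ^ (2 ^ r)).eval 1 = 1 := by simp [heval1]
  have hSne : S ^ (2 ^ r) ≠ 0 := fun h => by simp [h] at hev0
  have hXne : (X : Polynomial (ZMod 2)) ^ (2 ^ r) ≠ 0 := pow_ne_zero _ X_ne_zero
  have hX1ne : (X + 1 : Polynomial (ZMod 2)) ^ (2 ^ r) ≠ 0 := by
    rw [hX1]; exact pow_ne_zero _ (X_sub_C_ne_zero 1)
  have hAne : M1 ^ n + 1 ≠ 0 := by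
    rw [hfact]; exact mul_ne_zero (mul_ne_zero hXne hX1ne) hSne
  -- root multiplicities
  have hvalX : valX (M1 ^ n + 1) = 2 ^ r := by
    rw [valX, hfact, rootMultiplicity_mul (hfact ▸ hAne),
      rootMultiplicity_mul (mul_ne_zero hXne hX1ne)]
    have h1 : rootMultiplicity (0 : ZMod 2) (X ^ (2 ^ r)) = 2 ^ r := by
      simpa using rootMultiplicity_X_sub_C_pow (R := ZMod 2) 0 (2 ^ r)
    have h2 : rootMultiplicity (0 : ZMod 2) ((X + 1) ^ (2 ^ r)) = 0 :=
      rootMultiplicity_eq_zero (by simp [IsRoot])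
    have h3 : rootMultiplicity (0 : ZMod 2) (S ^ (2 ^ r)) = 0 :=
      rootMultiplicity_eq_zero (by simp [IsRoot, hev0])
    omega
  have hvalX1 : valX1 (M1 ^ n + 1) = 2 ^ r := by
    rw [valX1, hfact, rootMultiplicity_mul (hfact ▸ hAne),
      rootMultiplicity_mul (mul_ne_zero hXne hX1ne)]
    have h1 : rootMultiplicity (1 : ZMod 2) (X ^ (2 ^ r)) = 0 :=
      rootMultiplicity_eq_zero (by simp [IsRoot])
    have h2 : rootMultiplicity (1 : ZMod 2) ((X + 1) ^ (2 ^ r)) = 2 ^ r := by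
      rw [hX1]; exact rootMultiplicity_X_sub_C_pow (R := ZMod 2) 1 (2 ^ r)
    have h3 : rootMultiplicity (1 : ZMod 2) (S ^ (2 ^ r)) = 0 :=
      rootMultiplicity_eq_zero (by simp [IsRoot, hev1])
    omega
  refine ⟨hfact, hev0, hev1, hvalX, hvalX1, ?_⟩
  rw [oddPart, hvalX, hvalX1, hfact,
    mul_div_cancel_left₀ _ (mul_ne_zero hXne hX1ne)]
end

section
/- Let φ : F₂[x] → F₂[x] be the ring automorphism determined by x ↦ x + 1. Let A be a nonzero polynomial over F₂ with Collatz sequences (A_j), valuations (a_{2k}) and (b_{2k}), and let (A'_j), (a'_{2k}), (b'_{2k}) be the Collatz sequences and valuations of φ(A). Then A'_j = φ(A_j) for every j ≥ 0, and a'_{2k} = b_{2k}, b'_{2k} = a_{2k} for every k ≥ 0. -/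
/-
The substitution `x ↦ x + 1` is a ring automorphism of `𝔽₂[x]` exchanging the two primes `x`
and `x + 1` and fixing `M₁`. Hence it exchanges the valuations at `x` and `x + 1`, commutes with
taking odd parts, and commutes with `S ↦ 1 + M₁ S`; induction along the sequence does the rest.
-/

open Polynomial

namespace Polynomial

theorem rootMultiplicity_map_ringEquiv {R : Type*} [CommRing R] (φ : R[X] ≃+* R[X]) {a b : R}
    (h : φ (X - C a) = X - C b) (p : R[X]) :
    (φ p).rootMultiplicity b = p.rootMultiplicity a := by
  rcases eq_or_ne p 0 with rfl | hp
  · simp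
  have hφp : φ p ≠ 0 := (map_ne_zero_iff φ φ.injective).mpr hp
  refine eq_of_forall_le_iff fun n => ?_
  rw [le_rootMultiplicity_iff hφp, le_rootMultiplicity_iff hp, ← h, ← map_pow, map_dvd_iff]

theorem X_add_one_eq_X_sub_C_one {R : Type*} [Ring R] [CharP R 2] :
    (X + 1 : R[X]) = X - C 1 := by
  rw [map_one, CharTwo.sub_eq_add]

end Polynomial

theorem map_div_of_dvd {R S : Type*} [EuclideanDomain R] [EuclideanDomain S] (φ : R ≃+* S)
    {p q : R} (hqp : q ∣ p) : φ (p / q) = φ p / φ q := by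
  obtain ⟨r, rfl⟩ := hqp
  rcases eq_or_ne q 0 with rfl | hq
  · simp
  rw [mul_div_cancel_left₀ r hq, map_mul,
    mul_div_cancel_left₀ _ ((map_ne_zero_iff φ φ.injective).mpr hq)]

theorem X_pow_mul_X_add_one_pow_dvd (S : (ZMod 2)[X]) : X ^ valX S * (X + 1) ^ valX1 S ∣ S := by
  have h := pow_rootMultiplicity_mul_pow_rootMultiplicity_dvd (zero_ne_one : (0 : ZMod 2) ≠ 1) S
  rw [map_zero, sub_zero, ← X_add_one_eq_X_sub_C_one] at h
  exact h

theorem collatz_map (φ : (ZMod 2)[X] →+* (ZMod 2)[X])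
    (hφ_oddPart : ∀ S, oddPart (φ S) = φ (oddPart S)) (hφ_M1 : φ M1 = M1)
    (A : (ZMod 2)[X]) (j : ℕ) : collatz (φ A) j = φ (collatz A j) := by
  induction j with
  | zero => rfl
  | succ j ih =>
    simp only [collatz, ih]
    split_ifs
    · exact hφ_oddPart _
    · rw [map_add, map_one, map_mul, hφ_M1]

section SwapXAddOne

variable {φ : (ZMod 2)[X] ≃+* (ZMod 2)[X]} (hφ : φ X = X + 1)
include hφ

theorem map_X_add_one_of_map_X : φ (X + 1) = X := by
  rw [map_add, map_one, hφ, add_assoc, CharTwo.add_self_eq_zero, add_zero]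

theorem valX_map_of_map_X (S : (ZMod 2)[X]) : valX (φ S) = valX1 S :=
  rootMultiplicity_map_ringEquiv φ
    (by rw [map_zero, sub_zero, ← X_add_one_eq_X_sub_C_one, map_X_add_one_of_map_X hφ]) S

theorem valX1_map_of_map_X (S : (ZMod 2)[X]) : valX1 (φ S) = valX S :=
  rootMultiplicity_map_ringEquiv φ
    (by rw [map_zero, sub_zero, ← X_add_one_eq_X_sub_C_one, hφ]) S

theorem oddPart_map_of_map_X (S : (ZMod 2)[X]) : oddPart (φ S) = φ (oddPart S) := by
  have hdiv : φ (X ^ valX S * (X + 1) ^ valX1 S) = X ^ valX (φ S) * (X + 1) ^ valX1 (φ S) := by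
    rw [map_mul, map_pow, map_pow, hφ, map_X_add_one_of_map_X hφ, valX_map_of_map_X hφ,
      valX1_map_of_map_X hφ, mul_comm]
  rw [oddPart, oddPart, map_div_of_dvd φ (X_pow_mul_X_add_one_pow_dvd S), hdiv]

theorem map_M1_of_map_X : φ M1 = M1 := by
  simp only [M1, map_add, map_pow, map_one, hφ]
  linear_combination (X + 1) * (CharTwo.two_eq_zero : (2 : (ZMod 2)[X]) = 0)

end SwapXAddOne

theorem collatz_swap_automorphism_general
    (φ : Polynomial (ZMod 2) ≃+* Polynomial (ZMod 2)) (hφ : φ X = X + 1)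
    (A : Polynomial (ZMod 2)) :
    (∀ j : ℕ, collatz (φ A) j = φ (collatz A j)) ∧
    (∀ k : ℕ, valX (collatz (φ A) (2 * k)) = valX1 (collatz A (2 * k)) ∧
      valX1 (collatz (φ A) (2 * k)) = valX (collatz A (2 * k))) := by
  have hcollatz (j : ℕ) : collatz (φ A) j = φ (collatz A j) :=
    collatz_map φ.toRingHom (oddPart_map_of_map_X hφ) (map_M1_of_map_X hφ) A j
  refine ⟨hcollatz, fun k => ?_⟩
  rw [hcollatz]
  exact ⟨valX_map_of_map_X hφ _, valX1_map_of_map_X hφ _⟩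

/-- the automorphism `φ : x ↦ x + 1` of `𝔽₂[x]` commutes with the Collatz
transformations: `A'_j = φ(A_j)` for all `j`, and the valuations get swapped:
`a'_{2k} = b_{2k}`, `b'_{2k} = a_{2k}`. -/
theorem collatz_swap_automorphism
    (φ : Polynomial (ZMod 2) ≃+* Polynomial (ZMod 2)) (hφ : φ X = X + 1)
    (A : Polynomial (ZMod 2)) (hA : A ≠ 0) :
    (∀ j : ℕ, collatz (φ A) j = φ (collatz A j)) ∧
    (∀ k : ℕ, valX (collatz (φ A) (2 * k)) = valX1 (collatz A (2 * k)) ∧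
      valX1 (collatz (φ A) (2 * k)) = valX (collatz A (2 * k))) :=
  collatz_swap_automorphism_general φ hφ A
end
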